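/- Monotonicity of guessing: for a satisfiable CNF formula F, α ∈ sat(F), x ∈ V(F), and l ∈ α, one has P_guessed(F^{[l]}, x, α, s) ≤ P_guessed(F, x, α, s). -/

import Mathlib

attribute [local instance] Classical.propDecidable

noncomputable section

structure CNF where
  clauses : Finset (Finset (ℕ × Bool))
  vars : Finset ℕ

def litSat (α : ℕ → Bool) (l : ℕ × Bool) : Prop := α l.1 = l.2

def clauseSat (α : ℕ → Bool) (C : Finset (ℕ × Bool)) : Prop := ∃ l ∈ C, litSat α l

def Sat (F : CNF) (α : ℕ → Bool) : Prop := ∀ C ∈ F.clauses, clauseSat α C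

def CNF.Satisfiable (F : CNF) : Prop := ∃ α, Sat F α

/-- Restrict `F` by the literal `l` (set the variable of `l` so that `l` is true). -/
def restrict (F : CNF) (l : ℕ × Bool) : CNF :=
  ⟨(F.clauses.filter (fun C => l ∉ C)).image (fun C => C.filter (fun m => m ≠ (l.1, !l.2))),
   F.vars.erase l.1⟩

/-- A variable is frozen if all satisfying assignments agree on it. -/
def Frozen (F : CNF) (x : ℕ) : Prop :=
  x ∈ F.vars ∧ ∀ α β, Sat F α → Sat F β → α x = β x

/-- Satisfying literals: literals over the variables whose restriction stays satisfiable. -/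
def SL (F : CNF) : Finset (ℕ × Bool) :=
  (F.vars ×ˢ ({true, false} : Finset Bool)).filter (fun l => (restrict F l).Satisfiable)

/-- Probability that `AssignSatisfiableLiterals` outputs `α` (with fuel). -/
def prAux : ℕ → CNF → (ℕ → Bool) → ℝ
  | 0, _, _ => 1
  | n+1, F, α =>
    if F.vars = ∅ then 1
    else ((SL F).card : ℝ)⁻¹ *
      ∑ l ∈ (SL F).filter (fun l => litSat α l), prAux n (restrict F l) α

def pr (F : CNF) (α : ℕ → Bool) : ℝ := prAux F.vars.card F α

/-- A literal is `s`-implied if it is implied by at most `s` clauses of `F`. -/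
def sImplied (F : CNF) (s : ℕ) (l : ℕ × Bool) : Prop :=
  ∃ G : Finset (Finset (ℕ × Bool)), G ⊆ F.clauses ∧ G.card ≤ s ∧
    ∀ α : ℕ → Bool, (∀ C ∈ G, clauseSat α C) → litSat α l

def ImplicationFree (F : CNF) (s : ℕ) : Prop :=
  ∀ l : ℕ × Bool, l.1 ∈ F.vars → ¬ sImplied F s l

def impliedVars (F : CNF) (s : ℕ) : Finset ℕ :=
  F.vars.filter (fun x => sImplied F s (x, true) ∨ sImplied F s (x, false))

def impliedVal (F : CNF) (s : ℕ) (x : ℕ) : Bool :=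
  if sImplied F s (x, true) then true else false

def closureAux (s : ℕ) : ℕ → CNF → CNF
  | 0, F => F
  | n+1, F =>
    if h : (impliedVars F s).Nonempty then
      closureAux s n (restrict F ((impliedVars F s).min' h, impliedVal F s ((impliedVars F s).min' h)))
    else F

/-- Repeatedly fix all `s`-implied literals. -/
def pclosure (s : ℕ) (F : CNF) : CNF := closureAux s F.vars.card F

/-- `x` is guessed in the run of PPSZ with assignment `β` and permutation `π`. -/
def Guessed (s : ℕ) (β : ℕ → Bool) (x : ℕ) : CNF → List ℕ → Prop
  | _, [] => False
  | F, y :: π =>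
    if x ∉ (pclosure s F).vars then False
    else if y = x then True
    else Guessed s β x
      (if y ∈ (pclosure s F).vars then restrict (pclosure s F) (y, β y) else pclosure s F) π

/-- Probability over a uniformly random permutation of the variables that `x` is guessed. -/
def Pguessed (s : ℕ) (F : CNF) (x : ℕ) (α : ℕ → Bool) : ℝ :=
  ((F.vars.toList.permutations.countP (fun π => decide (Guessed s α x F π))) : ℝ) /
    (Nat.factorial F.vars.card)

/-- The final restricted formula of a PPSZ run. -/
def runPPSZ (s : ℕ) (β : ℕ → Bool) : CNF → List ℕ → CNF
  | F, [] => pclosure s F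
  | F, y :: π =>
    runPPSZ s β
      (if y ∈ (pclosure s F).vars then restrict (pclosure s F) (y, β y) else pclosure s F) π

/-- Success probability of PPSZ over uniform `β` and uniform permutation. -/
def psuccess (s : ℕ) (F : CNF) : ℝ :=
  (∑ b ∈ F.vars.powerset,
    ((F.vars.toList.permutations.countP
      (fun π => decide ((runPPSZ s (fun y => decide (y ∈ b)) F π).clauses = ∅))) : ℝ)) /
  (2 ^ F.vars.card * Nat.factorial F.vars.card)

def asg (b : Finset ℕ) : ℕ → Bool := fun y => decide (y ∈ b)

/-- The satisfying assignments of `F`, encoded as subsets of the variable set. -/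
def satAssignments (F : CNF) : Finset (Finset ℕ) :=
  F.vars.powerset.filter (fun b => Sat F (asg b))

/-- The PPSZ cost of variable `x` in `F`, with guessing bound `S`. -/
def cost (s : ℕ) (S : ℝ) (F : CNF) (x : ℕ) : ℝ :=
  if x ∉ F.vars then 0
  else if Frozen F x then
    ∑ b ∈ satAssignments F, pr F (asg b) * Pguessed s F x (asg b)
  else S

def totalCost (s : ℕ) (S : ℝ) (F : CNF) : ℝ := ∑ x ∈ F.vars, cost s S F x

/-!
When `α` satisfies the formula, the closure `pclosure s G` is the `α`-restriction of `G` to the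
least set of variables after whose restriction nothing is `s`-implied, because `s`-implication
survives restricting other variables by `α`. So restricting more variables by `α` beforehand only
shrinks the set of variables surviving each closure, and by induction along the permutation, if
`x` is guessed on `F[y]` under a permutation `π` of `V(F) \ {y}`, it is guessed on `F` under each
of the `|V(F)|` permutations obtained by inserting `y` into `π`. Dividing by `|V(F)|!` gives the
inequality.
-/

theorem CNF.ext {G H : CNF} (hc : G.clauses = H.clauses) (hv : G.vars = H.vars) : G = H := by
  cases G; cases H; simp_all

/-- `restrict` by all the literals `(w, α w)`, `w ∈ W`, at once. -/
def restrictOn (α : ℕ → Bool) (G : CNF) (W : Finset ℕ) : CNF :=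
  ⟨(G.clauses.filter (fun C => ∀ w ∈ W, (w, α w) ∉ C)).image
      (fun C => C.filter (·.1 ∉ W)),
   G.vars \ W⟩

section restrictOn

variable (α : ℕ → Bool)

theorem mem_clauses_restrict {G : CNF} {l : ℕ × Bool} {D : Finset (ℕ × Bool)} :
    D ∈ (restrict G l).clauses ↔
      ∃ C ∈ G.clauses, l ∉ C ∧ C.filter (· ≠ (l.1, !l.2)) = D := by
  simp only [restrict, Finset.mem_image, Finset.mem_filter, and_assoc]

theorem mem_clauses_restrictOn {G : CNF} {W : Finset ℕ} {D : Finset (ℕ × Bool)} :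
    D ∈ (restrictOn α G W).clauses ↔
      ∃ C ∈ G.clauses, (∀ w ∈ W, (w, α w) ∉ C) ∧ C.filter (·.1 ∉ W) = D := by
  simp only [restrictOn, Finset.mem_image, Finset.mem_filter, and_assoc]

@[simp] theorem vars_restrictOn (G : CNF) (W : Finset ℕ) :
    (restrictOn α G W).vars = G.vars \ W := rfl

@[simp] theorem restrictOn_empty (G : CNF) : restrictOn α G ∅ = G := by
  refine CNF.ext ?_ Finset.sdiff_empty
  ext D
  simp [mem_clauses_restrictOn]

theorem restrictOn_restrictOn (G : CNF) (W U : Finset ℕ) :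
    restrictOn α (restrictOn α G W) U = restrictOn α G (W ∪ U) := by
  refine CNF.ext ?_ sdiff_sdiff_left
  ext D
  simp only [mem_clauses_restrictOn, Finset.mem_union]
  constructor
  · rintro ⟨_, ⟨C, hC, hW, rfl⟩, hU, rfl⟩
    refine ⟨C, hC, fun w hw hwC => ?_, by ext; simp [and_assoc]⟩
    rcases hw with hw | hw
    · exact hW w hw hwC
    · by_cases hwW : w ∈ W
      · exact hW w hwW hwC
      · exact hU w hw (Finset.mem_filter.2 ⟨hwC, hwW⟩)
  · rintro ⟨C, hC, hWU, rfl⟩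
    refine ⟨_, ⟨C, hC, fun w hw => hWU w (Or.inl hw), rfl⟩,
      fun w hw hwC => hWU w (Or.inr hw) (Finset.mem_filter.1 hwC).1, by ext; simp [and_assoc]⟩

theorem restrict_eq_restrictOn (G : CNF) (z : ℕ) :
    restrict G (z, α z) = restrictOn α G {z} := by
  refine CNF.ext ?_ (Finset.sdiff_singleton_eq_erase z G.vars).symm
  ext D
  simp only [mem_clauses_restrict, mem_clauses_restrictOn, Finset.mem_singleton, forall_eq]
  refine exists_congr fun C => and_congr_right fun _ => and_congr_right fun hzC => ?_
  suffices C.filter (· ≠ (z, !α z)) = C.filter (·.1 ≠ z) by rw [this]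
  refine Finset.filter_congr fun m hm => ?_
  obtain ⟨v, b⟩ := m
  simp only [ne_eq, Prod.mk.injEq]
  constructor
  · rintro h rfl
    cases Bool.eq_or_eq_not b (α v) with
    | inl hb => exact hzC (hb ▸ hm)
    | inr hb => exact h ⟨rfl, hb⟩
  · exact fun h hv => h hv.1

theorem sat_restrictOn {G : CNF} (hG : Sat G α) (W : Finset ℕ) : Sat (restrictOn α G W) α := by
  intro D hD
  obtain ⟨C, hC, hW, rfl⟩ := (mem_clauses_restrictOn α).1 hD
  obtain ⟨⟨v, b⟩, hm, hmα⟩ := hG C hC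
  refine ⟨(v, b), Finset.mem_filter.2 ⟨hm, fun hv => hW v hv ?_⟩, hmα⟩
  rwa [show α v = b from hmα]

variable (s : ℕ)

/-- Pull a satisfying assignment of the restricted clauses back along `α` on `W`. -/
theorem sImplied_restrictOn {G : CNF} {l : ℕ × Bool} (h : sImplied G s l)
    {W : Finset ℕ} (hlW : l.1 ∉ W) : sImplied (restrictOn α G W) s l := by
  obtain ⟨G₀, hsub, hcard, himp⟩ := h
  refine ⟨(restrictOn α ⟨G₀, ∅⟩ W).clauses, fun D hD => ?_, ?_, fun β hβ => ?_⟩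
  · obtain ⟨C, hC, hW, rfl⟩ := (mem_clauses_restrictOn α).1 hD
    exact (mem_clauses_restrictOn α).2 ⟨C, hsub hC, hW, rfl⟩
  · exact Finset.card_image_le.trans (by convert (Finset.card_filter_le G₀ _).trans hcard)
  set β' : ℕ → Bool := fun v => if v ∈ W then α v else β v
  have hβ' : ∀ C ∈ G₀, clauseSat β' C := by
    intro C hC
    by_cases hWC : ∃ w ∈ W, (w, α w) ∈ C
    · obtain ⟨w, hw, hwC⟩ := hWC
      exact ⟨(w, α w), hwC, by simp [litSat, β', hw]⟩
    · push Not at hWC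
      obtain ⟨m, hm, hmβ⟩ := hβ _ ((mem_clauses_restrictOn α).2 ⟨C, hC, hWC, rfl⟩)
      obtain ⟨hmC, hmW⟩ := Finset.mem_filter.1 hm
      exact ⟨m, hmC, by simpa [litSat, β', hmW] using hmβ⟩
  simpa [litSat, β', hlW] using himp β' hβ'

end restrictOn

section closure

variable (α : ℕ → Bool) (s : ℕ)

theorem litSat_of_sImplied {G : CNF} (hG : Sat G α) {l : ℕ × Bool} (h : sImplied G s l) :
    litSat α l := by
  obtain ⟨G₀, hsub, -, himp⟩ := h
  exact himp α fun C hC => hG C (hsub hC)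

theorem impliedVars_subset (G : CNF) : impliedVars G s ⊆ G.vars :=
  Finset.filter_subset _ _

theorem mem_impliedVars_of_sImplied {G : CNF} {v : ℕ} (hv : v ∈ G.vars)
    (h : sImplied G s (v, α v)) : v ∈ impliedVars G s := by
  refine Finset.mem_filter.2 ⟨hv, ?_⟩
  cases hαv : α v <;> rw [hαv] at h <;> simp [h]

theorem sImplied_of_mem_impliedVars {G : CNF} (hG : Sat G α) {v : ℕ}
    (hv : v ∈ impliedVars G s) : impliedVal G s v = α v ∧ sImplied G s (v, α v) := by
  obtain ⟨-, h | h⟩ := Finset.mem_filter.1 hv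
  · have hαv : α v = true := litSat_of_sImplied α s hG h
    simp [impliedVal, h, hαv]
  · have hαv : α v = false := litSat_of_sImplied α s hG h
    have hnt : ¬ sImplied G s (v, true) := fun ht => by
      simpa [litSat, hαv] using litSat_of_sImplied α s hG ht
    simp [impliedVal, hnt, hαv, h]

theorem closureAux_of_impliedVars_eq_empty {G : CNF} (h : impliedVars G s = ∅) (n : ℕ) :
    closureAux s n G = G := by
  cases n with
  | zero => rfl
  | succ n => rw [closureAux, dif_neg (Finset.not_nonempty_iff_eq_empty.2 h)]

/-- A variable fixed by the closure is `s`-implied at that point and stays so after restricting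
any other variables by `α`, so it lies in every set in question. -/
theorem exists_isLeast_closureAux (n : ℕ) :
    ∀ G : CNF, G.vars.card ≤ n → Sat G α → ∃ W,
      IsLeast {U | impliedVars (restrictOn α G U) s = ∅} W ∧
        closureAux s n G = restrictOn α G W := by
  induction n with
  | zero =>
    intro G hn _
    have hG : impliedVars G s = ∅ :=
      Finset.subset_empty.1 <| (impliedVars_subset s G).trans
        (Finset.card_eq_zero.1 (Nat.le_zero.1 hn)).le
    exact ⟨∅, ⟨by simpa using hG, fun U _ => Finset.empty_subset U⟩, by simp [closureAux]⟩
  | succ n ih =>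
    intro G hn hG
    by_cases h : (impliedVars G s).Nonempty
    · set v := (impliedVars G s).min' h
      have hv : v ∈ impliedVars G s := Finset.min'_mem _ h
      obtain ⟨hval, himp⟩ := sImplied_of_mem_impliedVars α s hG hv
      have hstep : restrict G (v, impliedVal G s v) = restrictOn α G {v} := by
        rw [hval, restrict_eq_restrictOn]
      have hcard : (restrictOn α G {v}).vars.card ≤ n := by
        rw [vars_restrictOn, Finset.card_sdiff_of_subset
          (Finset.singleton_subset_iff.2 (impliedVars_subset s G hv))]
        simpa using hn
      obtain ⟨W, ⟨hW, hWleast⟩, hcl⟩ := ih _ hcard (sat_restrictOn α hG {v})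
      have hvU : ∀ U, impliedVars (restrictOn α G U) s = ∅ → v ∈ U := fun U hU => by
        by_contra hvU
        have hvG : v ∈ (restrictOn α G U).vars :=
          Finset.mem_sdiff.2 ⟨impliedVars_subset s G hv, hvU⟩
        have := mem_impliedVars_of_sImplied α s hvG (sImplied_restrictOn α s himp hvU)
        simp [hU] at this
      refine ⟨{v} ∪ W, ⟨?_, fun U hU => ?_⟩, ?_⟩
      · simpa [Set.mem_ofPred_eq, restrictOn_restrictOn] using hW
      · refine Finset.union_subset (Finset.singleton_subset_iff.2 (hvU U hU)) (hWleast ?_)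
        rwa [Set.mem_ofPred_eq, restrictOn_restrictOn,
          Finset.union_eq_right.2 (Finset.singleton_subset_iff.2 (hvU U hU))]
      · rw [closureAux, dif_pos h, hstep, hcl, restrictOn_restrictOn]
    · have hG' := Finset.not_nonempty_iff_eq_empty.1 h
      exact ⟨∅, ⟨by simpa using hG', fun U _ => Finset.empty_subset U⟩,
        by simp [closureAux_of_impliedVars_eq_empty s hG']⟩

theorem exists_isLeast_pclosure {G : CNF} (hG : Sat G α) : ∃ W,
    IsLeast {U | impliedVars (restrictOn α G U) s = ∅} W ∧ pclosure s G = restrictOn α G W :=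
  exists_isLeast_closureAux α s _ G le_rfl hG

theorem sat_pclosure {G : CNF} (hG : Sat G α) : Sat (pclosure s G) α := by
  obtain ⟨W, -, hW⟩ := exists_isLeast_pclosure α s hG
  exact hW ▸ sat_restrictOn α hG W

theorem pclosure_pclosure {G : CNF} (hG : Sat G α) : pclosure s (pclosure s G) = pclosure s G := by
  obtain ⟨W, ⟨hW, -⟩, hcl⟩ := exists_isLeast_pclosure α s hG
  rw [pclosure, closureAux_of_impliedVars_eq_empty s (hcl ▸ hW)]

theorem pclosure_restrictOn {G : CNF} (hG : Sat G α) (W : Finset ℕ) :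
    ∃ U, W ⊆ U ∧ pclosure s (restrictOn α G W) = restrictOn α (pclosure s G) U := by
  obtain ⟨V, ⟨-, hVleast⟩, hV⟩ := exists_isLeast_pclosure α s hG
  obtain ⟨V', ⟨hV', -⟩, hV'cl⟩ := exists_isLeast_pclosure α s (sat_restrictOn α hG W)
  rw [Set.mem_ofPred_eq, restrictOn_restrictOn] at hV'
  refine ⟨W ∪ V', Finset.subset_union_left, ?_⟩
  rw [hV'cl, hV, restrictOn_restrictOn, restrictOn_restrictOn,
    Finset.union_eq_right.2 (hVleast hV')]

theorem vars_pclosure_restrictOn_subset {G : CNF} (hG : Sat G α) (W : Finset ℕ) :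
    (pclosure s (restrictOn α G W)).vars ⊆ (pclosure s G).vars := by
  obtain ⟨U, -, hU⟩ := pclosure_restrictOn α s hG W
  rw [hU, vars_restrictOn]
  exact Finset.sdiff_subset

end closure

def ppszStep (s : ℕ) (β : ℕ → Bool) (G : CNF) (z : ℕ) : CNF :=
  if z ∈ (pclosure s G).vars then restrict (pclosure s G) (z, β z) else pclosure s G

section guessed

variable (α : ℕ → Bool) (s x : ℕ)

theorem guessed_cons {G : CNF} {z : ℕ} {π : List ℕ} :
    Guessed s α x G (z :: π) ↔
      x ∈ (pclosure s G).vars ∧ (z = x ∨ Guessed s α x (ppszStep s α G z) π) := by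
  by_cases hx : x ∈ (pclosure s G).vars <;> by_cases hz : z = x <;>
    simp [Guessed, ppszStep, hx, hz]

theorem mem_vars_pclosure_of_guessed {G : CNF} {π : List ℕ} (h : Guessed s α x G π) :
    x ∈ (pclosure s G).vars := by
  cases π with
  | nil => exact h.elim
  | cons z π => exact ((guessed_cons α s x).1 h).1

theorem ppszStep_eq_restrictOn (G : CNF) (z : ℕ) :
    ppszStep s α G z = restrictOn α (pclosure s G) ({z} ∩ (pclosure s G).vars) := by
  by_cases hz : z ∈ (pclosure s G).vars
  · rw [ppszStep, if_pos hz, Finset.singleton_inter_of_mem hz, restrict_eq_restrictOn]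
  · rw [ppszStep, if_neg hz, Finset.singleton_inter_of_notMem hz, restrictOn_empty]

theorem sat_ppszStep {G : CNF} (hG : Sat G α) (z : ℕ) : Sat (ppszStep s α G z) α := by
  rw [ppszStep_eq_restrictOn]
  exact sat_restrictOn α (sat_pclosure α s hG) _

theorem restrictOn_ppszStep_of_mem (G : CNF) {z : ℕ} {U : Finset ℕ} (hz : z ∈ U) :
    restrictOn α (ppszStep s α G z) U = restrictOn α (pclosure s G) U := by
  rw [ppszStep_eq_restrictOn, restrictOn_restrictOn]
  congr 1
  exact Finset.union_eq_right.2 (Finset.inter_subset_left.trans (Finset.singleton_subset_iff.2 hz))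

theorem ppszStep_restrictOn {G : CNF} (hG : Sat G α) (W : Finset ℕ) (z : ℕ) :
    ∃ U, W ⊆ U ∧
      ppszStep s α (restrictOn α G W) z = restrictOn α (ppszStep s α G z) U := by
  obtain ⟨U, hWU, hU⟩ := pclosure_restrictOn α s hG W
  refine ⟨U ∪ ({z} ∩ ((pclosure s G).vars \ U)), hWU.trans Finset.subset_union_left, ?_⟩
  rw [ppszStep_eq_restrictOn, ppszStep_eq_restrictOn, hU, restrictOn_restrictOn,
    restrictOn_restrictOn, vars_restrictOn]
  congr 1
  ext w
  simp only [Finset.mem_union, Finset.mem_inter, Finset.mem_singleton, Finset.mem_sdiff]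
  tauto

theorem guessed_pclosure {G : CNF} (hG : Sat G α) {π : List ℕ} (h : Guessed s α x G π) :
    Guessed s α x (pclosure s G) π := by
  cases π with
  | nil => exact h.elim
  | cons z π =>
    have hstep : ppszStep s α (pclosure s G) z = ppszStep s α G z := by
      simp only [ppszStep, pclosure_pclosure α s hG]
    rwa [guessed_cons, pclosure_pclosure α s hG, hstep, ← guessed_cons]

theorem guessed_of_guessed_restrictOn_filter (p : ℕ → Bool) (π : List ℕ) :
    ∀ {G : CNF} {W : Finset ℕ}, Sat G α → (∀ z, p z = false → z ∈ W) →
      Guessed s α x (restrictOn α G W) (π.filter p) → Guessed s α x G π := by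
  induction π with
  | nil => exact fun _ _ h => h.elim
  | cons z π ih =>
    intro G W hG hpW h
    have hx : x ∈ (pclosure s G).vars :=
      vars_pclosure_restrictOn_subset α s hG W (mem_vars_pclosure_of_guessed α s x h)
    refine (guessed_cons α s x).2 ⟨hx, or_iff_not_imp_left.2 fun hzx => ?_⟩
    cases hpz : p z
    · rw [List.filter_cons_of_neg (by simp [hpz])] at h
      obtain ⟨U, hWU, hU⟩ := pclosure_restrictOn α s hG W
      refine ih (sat_ppszStep α s hG z) (fun w hw => hWU (hpW w hw)) ?_
      rw [restrictOn_ppszStep_of_mem α s G (hWU (hpW z hpz)), ← hU]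
      exact guessed_pclosure α s x (sat_restrictOn α hG W) h
    · rw [List.filter_cons_of_pos hpz, guessed_cons] at h
      obtain ⟨U, hWU, hU⟩ := ppszStep_restrictOn α s hG W z
      refine ih (sat_ppszStep α s hG z) (fun w hw => hWU (hpW w hw)) ?_
      rw [← hU]
      exact h.2.resolve_left hzx

end guessed

section permutations

variable {β : Type*}

theorem filter_ne_of_mem_permutations'Aux [DecidableEq β] {y : β} {l σ : List β}
    (hσ : σ ∈ List.permutations'Aux y l) : σ.filter (· != y) = l.filter (· != y) := by
  induction l generalizing σ with
  | nil => simp_all [List.permutations'Aux]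
  | cons a l ih =>
    simp only [List.permutations'Aux, List.mem_cons, List.mem_map] at hσ
    rcases hσ with rfl | ⟨τ, hτ, rfl⟩
    · simp
    · simp [List.filter_cons, ih hτ]

theorem mul_countP_le_countP_permutations'_cons (y : β) (l : List β) (p q : List β → Bool)
    (h : ∀ π ∈ l.permutations', q π → ∀ σ ∈ List.permutations'Aux y π, p σ) :
    (l.length + 1) * l.permutations'.countP q ≤ (y :: l).permutations'.countP p := by
  rw [List.permutations', List.countP_flatMap]
  have hlen : ∀ π ∈ l.permutations', π.length = l.length :=
    fun π hπ => (List.mem_permutations'.1 hπ).length_eq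
  generalize l.permutations' = Ls at h hlen
  induction Ls with
  | nil => simp
  | cons π Ls ih =>
    simp only [List.forall_mem_cons] at h hlen
    rw [List.countP_cons, List.map_cons, List.sum_cons, Nat.mul_add, Nat.add_comm _ (List.sum _)]
    refine Nat.add_le_add (ih h.2 hlen.2) ?_
    by_cases hq : q π
    · rw [if_pos hq, Nat.mul_one, Function.comp_apply,
        List.countP_eq_length.2 (h.1 hq), List.length_permutations'Aux, hlen.1]
    · simp [hq]

end permutations

theorem card_add_one_mul_countP_guessed_restrict_le (s : ℕ) {F : CNF} {α : ℕ → Bool}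
    (x : ℕ) {y : ℕ} (hα : Sat F α) (hy : y ∈ F.vars) :
    ((restrict F (y, α y)).vars.card + 1) * (restrict F (y, α y)).vars.toList.permutations.countP
        (fun π => decide (Guessed s α x (restrict F (y, α y)) π)) ≤
      F.vars.toList.permutations.countP (fun π => decide (Guessed s α x F π)) := by
  set F' := restrict F (y, α y)
  have hy' : y ∉ F'.vars := Finset.notMem_erase y F.vars
  have hperm : F.vars.toList.Perm (y :: F'.vars.toList) :=
    (Finset.insert_erase hy).symm ▸ Finset.toList_insert hy'
  rw [(List.permutations_perm_permutations' _).countP_eq,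
    (List.permutations_perm_permutations' _).countP_eq, hperm.permutations'.countP_eq,
    ← Finset.length_toList]
  refine mul_countP_le_countP_permutations'_cons y _ _ _ fun π hπ hguess σ hσ => ?_
  have hyπ : ∀ z ∈ π, (z != y) = true := fun z hz => by
    have : z ∈ F'.vars := Finset.mem_toList.1 ((List.mem_permutations'.1 hπ).mem_iff.1 hz)
    simpa using ne_of_mem_of_not_mem this hy'
  refine decide_eq_true (guessed_of_guessed_restrictOn_filter α s x (· != y) σ hα
    (W := {y}) (by simp) ?_)
  rw [filter_ne_of_mem_permutations'Aux hσ, List.filter_eq_self.2 hyπ, ← restrict_eq_restrictOn]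
  exact of_decide_eq_true hguess

theorem Pguessed_monotone_general (s : ℕ) (F : CNF) (α : ℕ → Bool) (x y : ℕ)
    (hα : Sat F α) (hy : y ∈ F.vars) :
    Pguessed s (restrict F (y, α y)) x α ≤ Pguessed s F x α := by
  have hcard : F.vars.card = (restrict F (y, α y)).vars.card + 1 :=
    (Finset.card_erase_add_one hy).symm
  rw [Pguessed, Pguessed, hcard, div_le_div_iff₀ (by positivity) (by positivity),
    Nat.factorial_succ]
  exact_mod_cast (Nat.mul_le_mul_right _
    (card_add_one_mul_countP_guessed_restrict_le s x hα hy)).trans_eq' (by ring)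

/-- Monotonicity of the guessing probability under restriction by a literal of `α`. -/
theorem Pguessed_monotone (s : ℕ) (F : CNF) (α : ℕ → Bool) (x y : ℕ)
    (hF : F.Satisfiable) (hα : Sat F α) (hx : x ∈ F.vars) (hy : y ∈ F.vars) :
    Pguessed s (restrict F (y, α y)) x α ≤ Pguessed s F x α :=
  Pguessed_monotone_general s F α x y hα hy
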